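/- arXiv:1912.03220 — 3 statements merged into one kernel-verified Lean document; each statement's English description precedes it below -/
import Mathlib

section
/- Let F_t = {f_{(i,t)}(x) := t·f_i(x) + q_i : 1 ≤ i ≤ N} be a one-parameter affine family on ℝ^d with t_0 = 1/ρ(F), and assume F_t is not quasi-linear. Then there exists a real number τ > 0 such that for every t ∈ (0, τ) at which the maps f_{(1,t)}, …, f_{(N,t)} do not all have a common fixed point, the attractor A_t is not connected. -/
open Metric Filter Set
open scoped RealInnerProductSpace

noncomputable section

/-- The Hutchinson operator associated with a family of maps. -/
def hutch {ι E : Type*} (f : ι → E → E) (K : Set E) : Set E := ⋃ i, f i '' K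

/-- `A` is the attractor of the IFS `f`: `A` is a nonempty compact set such that the iterates
of the Hutchinson operator applied to any nonempty compact set converge to `A` in the
Hausdorff metric. -/
def IsAttractor {ι E : Type*} [MetricSpace E] (f : ι → E → E) (A : Set E) : Prop :=
  A.Nonempty ∧ IsCompact A ∧
    ∀ K : Set E, K.Nonempty → IsCompact K →
      Tendsto (fun n : ℕ => hausdorffDist ((hutch f)^[n] K) A) atTop (nhds 0)

/-- The joint spectral radius of a finite family of continuous linear maps. -/
def jsr {E : Type*} [NormedAddCommGroup E] [NormedSpace ℝ E] {N : ℕ}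
    (L : Fin N → E →L[ℝ] E) : ℝ :=
  limsup (fun k : ℕ =>
    (⨆ σ : Fin k → Fin N, ‖(List.ofFn fun j : Fin k => L (σ j)).prod‖) ^ ((1 : ℝ) / (k : ℝ)))
    atTop

/-- The one-parameter affine family `f_{(i,t)}(x) = t • f_i(x) + q_i` where
`f_i(x) = L_i x + a_i`. -/
def fam {E : Type*} [NormedAddCommGroup E] [NormedSpace ℝ E] {N : ℕ}
    (L : Fin N → E →L[ℝ] E) (a q : Fin N → E) (t : ℝ) (i : Fin N) (x : E) : E :=
  t • (L i x + a i) + q i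

/-- The family is linear: every `f_{(i,t)}`, `t ∈ [0, t₀)`, is conjugate to a linear map by a
single invertible affine map `h` independent of `i` and `t`. -/
def IsLinearFamily {E : Type*} [NormedAddCommGroup E] [NormedSpace ℝ E] {N : ℕ}
    (L : Fin N → E →L[ℝ] E) (a q : Fin N → E) : Prop :=
  ∃ h : E ≃ᵃ[ℝ] E, ∀ i : Fin N, ∀ t : ℝ, 0 ≤ t → t < 1 / jsr L →
    ∃ M : E →ₗ[ℝ] E, ∀ x, fam L a q t i x = h.symm (M (h x))

/-- The family is quasi-linear: for each `t ∈ [0, t₀)` there is an invertible affine map `h_t`,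
independent of `i`, conjugating every `f_{(i,t)}` to a linear map. -/
def IsQuasiLinearFamily {E : Type*} [NormedAddCommGroup E] [NormedSpace ℝ E] {N : ℕ}
    (L : Fin N → E →L[ℝ] E) (a q : Fin N → E) : Prop :=
  ∀ t : ℝ, 0 ≤ t → t < 1 / jsr L → ∃ h : E ≃ᵃ[ℝ] E, ∀ i : Fin N,
    ∃ M : E →ₗ[ℝ] E, ∀ x, fam L a q t i x = h.symm (M (h x))

/-- The family is semi-linear: for each `i` there is an invertible affine map `h_i`,
independent of `t`, conjugating `f_{(i,t)}` to a linear map for all `t ∈ [0, t₀)`. -/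
def IsSemiLinearFamily {E : Type*} [NormedAddCommGroup E] [NormedSpace ℝ E] {N : ℕ}
    (L : Fin N → E →L[ℝ] E) (a q : Fin N → E) : Prop :=
  ∀ i : Fin N, ∃ h : E ≃ᵃ[ℝ] E, ∀ t : ℝ, 0 ≤ t → t < 1 / jsr L →
    ∃ M : E →ₗ[ℝ] E, ∀ x, fam L a q t i x = h.symm (M (h x))

/-- The hyperplane `{x | φ x = c}` (with `φ` a nonzero linear functional) separates `S`:
it misses `S` and `S` meets both open half-spaces. -/
def SeparatesHyp {E : Type*} [AddCommGroup E] [Module ℝ E]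
    (φ : E →ₗ[ℝ] ℝ) (c : ℝ) (S : Set E) : Prop :=
  φ ≠ 0 ∧ (∀ x ∈ S, φ x ≠ c) ∧ (∃ x ∈ S, φ x < c) ∧ (∃ x ∈ S, c < φ x)

/-- A set is strongly disconnected if some hyperplane separates it. -/
def StronglyDisconnected {E : Type*} [AddCommGroup E] [Module ℝ E] (S : Set E) : Prop :=
  ∃ (φ : E →ₗ[ℝ] ℝ) (c : ℝ), SeparatesHyp φ c S

/-- A set is weakly connected if no hyperplane separates it. -/
def WeaklyConnected {E : Type*} [AddCommGroup E] [Module ℝ E] (S : Set E) : Prop :=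
  ¬ StronglyDisconnected S

/-- A weak component of a compact set `S` is a maximal weakly connected compact subset of `S`. -/
def IsWeakComponent {E : Type*} [NormedAddCommGroup E] [NormedSpace ℝ E]
    (S C : Set E) : Prop :=
  C.Nonempty ∧ C ⊆ S ∧ IsCompact C ∧ WeaklyConnected C ∧
    ∀ C' : Set E, C' ⊆ S → IsCompact C' → WeaklyConnected C' → C ⊆ C' → C' = C

/-- A (nondegenerate right circular) cone with apex `x`, axis direction `v`, radius `r` and
half-angle `θ`. -/
def coneSet {E : Type*} [NormedAddCommGroup E] [InnerProductSpace ℝ E]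
    (x v : E) (r θ : ℝ) : Set E :=
  {y | ‖y - x‖ ≤ r ∧ ‖y - x‖ * Real.cos θ ≤ ⟪y - x, v⟫}

/-- A boundary point `x` of `K` is a cusp of `K` if no cone with apex `x` is contained in `K`. -/
def IsConeCusp {E : Type*} [NormedAddCommGroup E] [InnerProductSpace ℝ E]
    (K : Set E) (x : E) : Prop :=
  x ∈ frontier K ∧ ∀ (v : E) (r θ : ℝ), ‖v‖ = 1 → 0 < r → 0 < θ → θ < Real.pi / 2 →
    ¬ coneSet x v r θ ⊆ K

/-- The one-parameter family is tame: whenever the attractor `A_t` has nonempty interior,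
some fixed point of a map of `F_t` is not a cusp of `A_t`. -/
def TameFamily {E : Type*} [NormedAddCommGroup E] [InnerProductSpace ℝ E] {N : ℕ}
    (L : Fin N → E →L[ℝ] E) (a q : Fin N → E) : Prop :=
  ∀ t : ℝ, 0 ≤ t → t < 1 / jsr L → ∀ A : Set E, IsAttractor (fam L a q t) A →
    (interior A).Nonempty → ∃ (i : Fin N) (x : E), fam L a q t i x = x ∧ ¬ IsConeCusp A x

end

/-!
Expand a would-be common fixed point of the maps `f_{(i,t)}` as a formal power series
`∑ t ^ k p_k` in `t`. If the coefficients forced by the individual maps never disagree, the series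
converges for small `t` and its sum is a common fixed point. Otherwise let `k` be the first order
at which they disagree: up to a common translation, every `f_{(i,t)}` maps a ball of radius
`O(t ^ k)` into a ball of radius `O(t ^ (k + 1))` around `t ^ k p_{k,i}`. The attractor lies in the
union of these small balls and, being invariant, meets each of them; two of them are `Θ(t ^ k)`
apart, so the attractor is disconnected.
-/

open Topology

section Attractor

variable {ι E : Type*} {f : ι → E → E} {A K T : Set E}

lemma mem_hutch {x : E} (i : ι) (hx : x ∈ K) : f i x ∈ hutch f K :=
  mem_iUnion.2 ⟨i, mem_image_of_mem _ hx⟩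

lemma hutch_subset (h : ∀ i, MapsTo (f i) K T) : hutch f K ⊆ T :=
  iUnion_subset fun i => (h i).image_subset

lemma iterate_hutch_subset (h : ∀ i, MapsTo (f i) K K) (n : ℕ) : (hutch f)^[n] K ⊆ K := by
  induction n with
  | zero => exact subset_rfl
  | succ n ih =>
    rw [Function.iterate_succ_apply']
    exact hutch_subset fun i => (h i).mono_left ih

lemma nonempty_iterate_hutch [Nonempty ι] (hK : K.Nonempty) (n : ℕ) :
    ((hutch f)^[n] K).Nonempty := by
  induction n with
  | zero => exact hK
  | succ n ih =>
    rw [Function.iterate_succ_apply']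
    obtain ⟨x, hx⟩ := ih
    exact ⟨_, mem_hutch (Classical.arbitrary ι) hx⟩

variable [MetricSpace E]

lemma isCompact_iterate_hutch [Finite ι] (hf : ∀ i, Continuous (f i)) (hK : IsCompact K)
    (n : ℕ) : IsCompact ((hutch f)^[n] K) := by
  induction n with
  | zero => exact hK
  | succ n ih =>
    rw [Function.iterate_succ_apply']
    exact isCompact_iUnion fun i => ih.image (hf i)

variable [Finite ι] [Nonempty ι]

lemma IsAttractor.eventually_hausdorffDist_lt (hf : ∀ i, Continuous (f i))
    (hA : IsAttractor f A) (hK : IsCompact K) (hKne : K.Nonempty) {ε : ℝ} (hε : 0 < ε) :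
    ∀ᶠ n in atTop, hausdorffDist ((hutch f)^[n] K) A < ε ∧
      hausdorffEDist ((hutch f)^[n] K) A ≠ ⊤ :=
  ((hA.2.2 K hKne hK).eventually (gt_mem_nhds hε)).mono fun n hn =>
    ⟨hn, hausdorffEDist_ne_top_of_nonempty_of_bounded (nonempty_iterate_hutch hKne n) hA.1
      (isCompact_iterate_hutch hf hK n).isBounded hA.2.1.isBounded⟩

lemma IsAttractor.subset_of_eventually_subset (hf : ∀ i, Continuous (f i))
    (hA : IsAttractor f A) (hK : IsCompact K) (hKne : K.Nonempty) (hT : IsClosed T)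
    (h : ∀ᶠ n in atTop, (hutch f)^[n] K ⊆ T) : A ⊆ T := by
  intro x hx
  refine hT.closure_subset (Metric.mem_closure_iff.2 fun ε hε => ?_)
  obtain ⟨n, ⟨hn, hfin⟩, hnT⟩ := ((hA.eventually_hausdorffDist_lt hf hK hKne hε).and h).exists
  obtain ⟨y, hy, hxy⟩ := exists_dist_lt_of_hausdorffDist_lt' hx hn hfin
  exact ⟨y, hnT hy, by rwa [dist_comm]⟩

lemma IsAttractor.mapsTo (hf : ∀ i, Continuous (f i)) (hA : IsAttractor f A) (i : ι) :
    MapsTo (f i) A A := by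
  intro x hx
  refine hA.2.1.isClosed.closure_subset (Metric.mem_closure_iff.2 fun ε hε => ?_)
  obtain ⟨δ, hδ, hfδ⟩ := Metric.continuous_iff.1 (hf i) x (ε / 2) (half_pos hε)
  obtain ⟨n, ⟨hn, hfin⟩, hn', hfin'⟩ :=
    ((hA.eventually_hausdorffDist_lt hf hA.2.1 hA.1 hδ).and
      ((hA.eventually_hausdorffDist_lt hf hA.2.1 hA.1 (half_pos hε)).filter_mono
        (tendsto_add_atTop_nat 1))).exists
  obtain ⟨y, hy, hxy⟩ := exists_dist_lt_of_hausdorffDist_lt' hx hn hfin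
  have hfy : f i y ∈ (hutch f)^[n + 1] A := by
    rw [Function.iterate_succ_apply']; exact mem_hutch i hy
  obtain ⟨b, hb, hyb⟩ := exists_dist_lt_of_hausdorffDist_lt hfy hn' hfin'
  refine ⟨b, hb, ?_⟩
  calc dist (f i x) b ≤ dist (f i x) (f i y) + dist (f i y) b := dist_triangle _ _ _
    _ < ε / 2 + ε / 2 := add_lt_add (by rw [dist_comm]; exact hfδ y hxy) hyb
    _ = ε := add_halves ε

lemma IsAttractor.subset_iUnion_closedBall (hf : ∀ i, Continuous (f i))
    (hA : IsAttractor f A) (hK : IsCompact K) (hKne : K.Nonempty) (hKK : ∀ i, MapsTo (f i) K K)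
    {z : ι → E} {ρ : ℝ} (hz : ∀ i, MapsTo (f i) K (closedBall (z i) ρ)) :
    A ⊆ ⋃ i, closedBall (z i) ρ := by
  refine hA.subset_of_eventually_subset hf hK hKne
    (isClosed_iUnion_of_finite fun i => isClosed_closedBall)
    (eventually_atTop.2 ⟨1, fun m hm => ?_⟩)
  obtain ⟨n, rfl⟩ := Nat.exists_eq_add_of_le' hm
  rw [Function.iterate_succ_apply']
  exact hutch_subset fun i => ((hz i).mono_left (iterate_hutch_subset hKK n)).mono_right
    (subset_iUnion (fun j => closedBall (z j) ρ) i)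

end Attractor

lemma not_isPreconnected_of_dist_gap {E : Type*} [PseudoMetricSpace E] {A : Set E} {c : E}
    {r s : ℝ} (hrs : r < s) (hA : ∀ x ∈ A, dist x c ≤ r ∨ s ≤ dist x c)
    {x y : E} (hx : x ∈ A) (hxc : dist x c ≤ r) (hy : y ∈ A) (hyc : s ≤ dist y c) :
    ¬ IsPreconnected A := by
  intro hconn
  have hmid : (r + s) / 2 ∈ (fun x => dist x c) '' A :=
    (hconn.image _ (by fun_prop : Continuous fun x => dist x c).continuousOn).Icc_subset
      (mem_image_of_mem _ hx) (mem_image_of_mem _ hy) ⟨by linarith, by linarith⟩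
  obtain ⟨w, hw, hwc⟩ := hmid
  rcases hA w hw with h | h <;> linarith

lemma IsAttractor.not_isPreconnected_of_clusters {ι E : Type*} [MetricSpace E] [Finite ι]
    {f : ι → E → E} {A K : Set E} (hf : ∀ i, Continuous (f i)) (hA : IsAttractor f A)
    (hK : IsCompact K) (hKne : K.Nonempty) (hKK : ∀ i, MapsTo (f i) K K) {z : ι → E}
    {ρ D : ℝ} (hz : ∀ i, MapsTo (f i) K (closedBall (z i) ρ)) (hρD : 2 * ρ < D) {i₀ j : ι}
    (hj : z j ≠ z i₀) (hD : ∀ i, z i ≠ z i₀ → D ≤ dist (z i) (z i₀)) : ¬ IsPreconnected A := by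
  have : Nonempty ι := ⟨i₀⟩
  have hAK : A ⊆ K := hA.subset_of_eventually_subset hf hK hKne hK.isClosed
    (Eventually.of_forall (iterate_hutch_subset hKK))
  have hAz := hA.subset_iUnion_closedBall hf hK hKne hKK hz
  have hnear : ∀ i, ∃ x ∈ A, dist x (z i) ≤ ρ := fun i =>
    let ⟨x, hx⟩ := hA.1
    ⟨f i x, hA.mapsTo hf i hx, hz i (hAK hx)⟩
  obtain ⟨x, hx, hxz⟩ := hnear i₀
  obtain ⟨y, hy, hyz⟩ := hnear j
  have hfar : ∀ w i, dist w (z i) ≤ ρ → z i ≠ z i₀ → D - ρ ≤ dist w (z i₀) := fun w i hw hi => by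
    have := dist_triangle_left (z i) (z i₀) w
    linarith [hD i hi]
  refine not_isPreconnected_of_dist_gap (r := ρ) (s := D - ρ) (by linarith)
    (fun w hw => ?_) hx hxz hy (hfar y j hyz hj)
  obtain ⟨i, hi⟩ := mem_iUnion.1 (hAz hw)
  by_cases hzi : z i = z i₀
  · exact Or.inl (hzi ▸ hi)
  · exact Or.inr (hfar w i hi hzi)

lemma exists_pos_le_norm_of_ne_zero {ι F : Type*} [Finite ι] [NormedAddCommGroup F]
    (v : ι → F) : ∃ D > 0, ∀ i, v i ≠ 0 → D ≤ ‖v i‖ := by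
  classical
  cases isEmpty_or_nonempty ι
  · exact ⟨1, one_pos, fun i => isEmptyElim i⟩
  obtain ⟨i₀, hi₀⟩ := Finite.exists_min fun i => if v i = 0 then 1 else ‖v i‖
  refine ⟨_, ?_, fun i hi => (hi₀ i).trans_eq (if_neg hi)⟩
  split_ifs with h
  exacts [one_pos, norm_pos_iff.2 h]

section Family

variable {E : Type*} [NormedAddCommGroup E] [NormedSpace ℝ E] {N : ℕ}
  (L : Fin N → E →L[ℝ] E) (a q : Fin N → E)

lemma continuous_fam (t : ℝ) (i : Fin N) : Continuous (fam L a q t i) := by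
  unfold fam; fun_prop

variable [NeZero N]

/-- `fixedPointCoeff L a q k i` is the coefficient of `t ^ k` that the fixed-point equation of
`f_{(i,t)}` imposes, given the lower coefficients of the formal fixed point `∑ t ^ k p_k` of
`f_{(0,t)}`. The maps share a formal fixed point iff no coefficient depends on `i`. -/
def fixedPointCoeff : ℕ → Fin N → E
  | 0 => q
  | k + 1 => fun i => L i (fixedPointCoeff k 0) + if k = 0 then a i else 0

lemma norm_fixedPointCoeff_le (k : ℕ) :
    ‖fixedPointCoeff L a q k 0‖ ≤ (‖L 0‖ + ‖a 0‖ + ‖q 0‖ + 1) ^ (k + 1) := by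
  set G := ‖L 0‖ + ‖a 0‖ + ‖q 0‖ + 1
  have hL := norm_nonneg (L 0)
  have ha := norm_nonneg (a 0)
  have hq := norm_nonneg (q 0)
  induction k with
  | zero => simp only [fixedPointCoeff, zero_add, pow_one]; linarith
  | succ k ih =>
    have hG : 1 ≤ G ^ (k + 1) := one_le_pow₀ (by linarith)
    have hc : ‖fixedPointCoeff L a q (k + 1) 0‖ ≤ ‖L 0‖ * G ^ (k + 1) + ‖a 0‖ := by
      refine (norm_add_le _ _).trans (add_le_add ?_ ?_)
      · exact ((L 0).le_opNorm _).trans (mul_le_mul_of_nonneg_left ih hL)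
      · split_ifs <;> simp [ha]
    calc ‖fixedPointCoeff L a q (k + 1) 0‖ ≤ ‖L 0‖ * G ^ (k + 1) + ‖a 0‖ * G ^ (k + 1) := by
          nlinarith
      _ ≤ G * G ^ (k + 1) := by nlinarith
      _ = G ^ (k + 1 + 1) := by ring

lemma exists_common_fixedPoint [CompleteSpace E]
    (h : ∀ k i, fixedPointCoeff L a q k i = fixedPointCoeff L a q k 0) :
    ∃ τ > 0, ∀ t, 0 ≤ t → t < τ → ∃ p, ∀ i, fam L a q t i p = p := by
  set G := ‖L 0‖ + ‖a 0‖ + ‖q 0‖ + 1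
  have hG : 0 < G := by positivity
  refine ⟨1 / G, by positivity, fun t ht htG => ?_⟩
  replace htG : t * G < 1 := (lt_div_iff₀ hG).1 htG
  set c := fun k => t ^ k • fixedPointCoeff L a q k 0
  have hc : Summable c := by
    refine Summable.of_norm_bounded
      ((summable_geometric_of_lt_one (by positivity) htG).mul_left G) fun k => ?_
    rw [norm_smul, norm_pow, Real.norm_of_nonneg ht, mul_pow, mul_left_comm, ← pow_succ']
    exact mul_le_mul_of_nonneg_left (norm_fixedPointCoeff_le L a q k) (by positivity)
  refine ⟨∑' k, c k, fun i => ?_⟩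
  have hshift : HasSum (fun k => c (k + 1)) (∑' k, c k - q 0) := by
    simpa [c, fixedPointCoeff] using (hasSum_nat_add_iff' 1).2 hc.hasSum
  have hL : HasSum (fun k => c (k + 1)) (t • (L i (∑' k, c k) + a i)) := by
    have hLi := ((L i).hasSum hc.hasSum).const_smul t
    have ha : HasSum (fun k => t • (if k = 0 then a i else 0 : E)) (t • a i) :=
      (hasSum_ite_eq 0 (a i)).const_smul t
    convert (hLi.add ha).congr_fun fun k => ?_ using 1
    · rw [smul_add]
    · simp only [c, ← h (k + 1) i, fixedPointCoeff.eq_2]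
      rcases k with _ | k <;> simp [pow_succ', mul_smul]
  have hq : q i = q 0 := h 0 i
  rw [fam, hL.unique hshift, hq, sub_add_cancel]

def fixedPointApprox (t : ℝ) (k : ℕ) : E :=
  ∑ m ∈ Finset.range k, t ^ m • fixedPointCoeff L a q m 0

lemma fixedPointApprox_succ (t : ℝ) (k : ℕ) :
    fixedPointApprox L a q t (k + 1) =
      fixedPointApprox L a q t k + t ^ k • fixedPointCoeff L a q k 0 :=
  Finset.sum_range_succ _ _

section FirstDisagreement

variable {L a q} {k : ℕ}
  (hlow : ∀ m < k, ∀ i, fixedPointCoeff L a q m i = fixedPointCoeff L a q m 0)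
include hlow

lemma fam_eq_fixedPointApprox_add (t : ℝ) (i : Fin N) (x : E) :
    fam L a q t i x = fixedPointApprox L a q t k + t ^ k • fixedPointCoeff L a q k i
      + t • (L i (x - fixedPointApprox L a q t k) + if k = 0 then a i else 0) := by
  induction k with
  | zero =>
    simp only [fixedPointApprox, Finset.range_zero, Finset.sum_empty, pow_zero, one_smul,
      sub_zero, if_true, fam]
    rw [fixedPointCoeff]
    abel
  | succ k ih =>
    rw [ih (fun m hm => hlow m (hm.trans k.lt_succ_self)), hlow k k.lt_succ_self i,
      fixedPointApprox_succ, fixedPointCoeff.eq_2]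
    simp only [k.succ_ne_zero, if_false, add_zero, map_sub, map_add, map_smul]
    split_ifs with hk
    · subst hk
      simp only [fixedPointApprox, Finset.range_zero, Finset.sum_empty, pow_zero, one_smul,
        zero_add, pow_one, map_zero]
      module
    · module

lemma dist_fam_le {t : ℝ} (ht : 0 ≤ t) (i : Fin N) (x : E) :
    dist (fam L a q t i x) (fixedPointApprox L a q t k + t ^ k • fixedPointCoeff L a q k i) ≤
      t * (‖L i‖ * dist x (fixedPointApprox L a q t k) + t ^ k * ‖a i‖) := by
  rw [fam_eq_fixedPointApprox_add hlow, dist_eq_norm, add_sub_cancel_left, norm_smul,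
    Real.norm_of_nonneg ht, dist_eq_norm]
  gcongr
  refine (norm_add_le _ _).trans (add_le_add ((L i).le_opNorm _) ?_)
  split_ifs with hk
  · simp [hk]
  · simp only [norm_zero]; positivity

variable {t Λ α : ℝ} (ht : 0 ≤ t) (hL : ∀ i, ‖L i‖ ≤ Λ) (ha : ∀ i, ‖a i‖ ≤ α)
include ht hL ha

lemma mapsTo_fam_closedBall_cluster (R : ℝ) (i : Fin N) :
    MapsTo (fam L a q t i) (closedBall (fixedPointApprox L a q t k) R)
      (closedBall (fixedPointApprox L a q t k + t ^ k • fixedPointCoeff L a q k i)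
        (t * (Λ * R + t ^ k * α))) := by
  intro x hx
  have hΛ : 0 ≤ Λ := (norm_nonneg _).trans (hL i)
  calc dist (fam L a q t i x) _ ≤ _ := dist_fam_le hlow ht i x
    _ ≤ t * (Λ * R + t ^ k * α) := by
      gcongr
      · exact hL i
      · exact hx
      · exact ha i

lemma mapsTo_fam_closedBall {B : ℝ} (hB : ∀ i, ‖fixedPointCoeff L a q k i‖ ≤ B)
    (htB : t * (2 * Λ * B + α) ≤ B) (i : Fin N) :
    MapsTo (fam L a q t i) (closedBall (fixedPointApprox L a q t k) (2 * t ^ k * B))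
      (closedBall (fixedPointApprox L a q t k) (2 * t ^ k * B)) := by
  intro x hx
  have hcluster := mapsTo_fam_closedBall_cluster hlow ht hL ha _ i hx
  have hcenter : dist (fixedPointApprox L a q t k + t ^ k • fixedPointCoeff L a q k i)
      (fixedPointApprox L a q t k) ≤ t ^ k * B := by
    rw [dist_eq_norm, add_sub_cancel_left, norm_smul, Real.norm_of_nonneg (by positivity)]
    exact mul_le_mul_of_nonneg_left (hB i) (by positivity)
  have htk : 0 ≤ t ^ k := by positivity
  calc dist (fam L a q t i x) _ ≤ _ := dist_triangle _ _ _
    _ ≤ t * (Λ * (2 * t ^ k * B) + t ^ k * α) + t ^ k * B := add_le_add hcluster hcenter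
    _ ≤ 2 * t ^ k * B := by nlinarith

end FirstDisagreement

theorem exists_not_isPreconnected_attractor [ProperSpace E]
    (h : ∃ k i, fixedPointCoeff L a q k i ≠ fixedPointCoeff L a q k 0) :
    ∃ τ > 0, ∀ t, 0 < t → t < τ → ∀ A, IsAttractor (fam L a q t) A → ¬ IsPreconnected A := by
  classical
  set k := Nat.find h
  obtain ⟨j, hj⟩ := Nat.find_spec h
  have hlow : ∀ m < k, ∀ i, fixedPointCoeff L a q m i = fixedPointCoeff L a q m 0 :=
    fun m hm i => not_not.1 fun hne => Nat.find_min h hm ⟨i, hne⟩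
  set c := fixedPointCoeff L a q k
  have hL : ∀ i, ‖L i‖ ≤ ∑ i, ‖L i‖ := fun i =>
    Finset.single_le_sum (fun i _ => norm_nonneg (L i)) (Finset.mem_univ i)
  have ha : ∀ i, ‖a i‖ ≤ ∑ i, ‖a i‖ := fun i =>
    Finset.single_le_sum (fun i _ => norm_nonneg (a i)) (Finset.mem_univ i)
  set B := 1 + ∑ i, ‖c i‖
  have hB : ∀ i, ‖c i‖ ≤ B := fun i => by
    have := Finset.single_le_sum (fun i _ => norm_nonneg (c i)) (Finset.mem_univ i); linarith
  obtain ⟨D, hD, hDle⟩ := exists_pos_le_norm_of_ne_zero fun i => c i - c 0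
  set M := 2 * (∑ i, ‖L i‖) * B + ∑ i, ‖a i‖
  have hsmall : ∀ᶠ t in 𝓝 (0 : ℝ), t * M < B ∧ t * M < D / 2 := by
    have hM : Tendsto (fun t : ℝ => t * M) (𝓝 0) (𝓝 0) := by
      simpa using (continuous_mul_const M).tendsto 0
    exact (hM.eventually (gt_mem_nhds (by positivity))).and
      (hM.eventually (gt_mem_nhds (half_pos hD)))
  obtain ⟨τ, hτ, hsmallτ⟩ := Metric.eventually_nhds_iff.1 hsmall
  refine ⟨τ, hτ, fun t ht htτ A hA => ?_⟩
  obtain ⟨htB, htD⟩ := hsmallτ (by rwa [Real.dist_0_eq_abs, abs_of_pos ht])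
  have htk : 0 < t ^ k := pow_pos ht k
  have hdist : ∀ i, dist (fixedPointApprox L a q t k + t ^ k • c i)
      (fixedPointApprox L a q t k + t ^ k • c 0) = t ^ k * ‖c i - c 0‖ := fun i => by
    rw [dist_add_left, dist_smul₀, Real.norm_of_nonneg htk.le, dist_eq_norm]
  refine hA.not_isPreconnected_of_clusters (continuous_fam L a q t) (isCompact_closedBall _ _)
    (nonempty_closedBall.2 (by positivity)) (mapsTo_fam_closedBall hlow ht.le hL ha hB htB.le)
    (mapsTo_fam_closedBall_cluster hlow ht.le hL ha _) (D := t ^ k * D) ?_ (i₀ := 0) (j := j)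
    ((add_right_injective _).ne ((smul_right_injective E htk.ne').ne hj)) fun i hi => ?_
  · calc 2 * (t * ((∑ i, ‖L i‖) * (2 * t ^ k * B) + t ^ k * ∑ i, ‖a i‖))
        = t ^ k * (2 * (t * M)) := by ring
      _ < t ^ k * D := by gcongr; linarith
  · have hci : c i - c 0 ≠ 0 :=
      sub_ne_zero.2 fun hc => hi (congrArg (fixedPointApprox L a q t k + t ^ k • ·) hc)
    rw [hdist]
    exact mul_le_mul_of_nonneg_left (hDle i hci) htk.le

end Family

theorem stmt8_general {d N : ℕ} (hN : 2 ≤ N)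
    (L : Fin N → EuclideanSpace ℝ (Fin d) →L[ℝ] EuclideanSpace ℝ (Fin d))
    (a q : Fin N → EuclideanSpace ℝ (Fin d)) :
    ∃ τ : ℝ, 0 < τ ∧
      ∀ t : ℝ, 0 < t → t < τ →
        (¬ ∃ p : EuclideanSpace ℝ (Fin d), ∀ i : Fin N, fam L a q t i p = p) →
        ∀ A : Set (EuclideanSpace ℝ (Fin d)), IsAttractor (fam L a q t) A →
          ¬ IsConnected A := by
  have : NeZero N := ⟨by omega⟩
  by_cases hcoeff : ∀ k i, fixedPointCoeff L a q k i = fixedPointCoeff L a q k 0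
  · obtain ⟨τ, hτ, hfix⟩ := exists_common_fixedPoint L a q hcoeff
    exact ⟨τ, hτ, fun t ht htτ hnofix => absurd (hfix t ht.le htτ) hnofix⟩
  · push Not at hcoeff
    obtain ⟨τ, hτ, hdisc⟩ := exists_not_isPreconnected_attractor L a q hcoeff
    exact ⟨τ, hτ, fun t ht htτ _ A hA hA' => hdisc t ht htτ A hA hA'.isPreconnected⟩

/-- For a one-parameter affine family on `ℝ^d` that is not quasi-linear,
there is `τ > 0` such that for every `t ∈ (0, τ)` at which the maps `f_{(i,t)}` do not all
have a common fixed point, the attractor `A_t` is not connected. -/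
theorem stmt8 {d N : ℕ} (hN : 2 ≤ N)
    (L : Fin N → EuclideanSpace ℝ (Fin d) →L[ℝ] EuclideanSpace ℝ (Fin d))
    (hL : ∀ i, Function.Bijective (L i))
    (a q : Fin N → EuclideanSpace ℝ (Fin d))
    (hρ : 0 < jsr L)
    (hql : ¬ IsQuasiLinearFamily L a q) :
    ∃ τ : ℝ, 0 < τ ∧
      ∀ t : ℝ, 0 < t → t < τ →
        (¬ ∃ p : EuclideanSpace ℝ (Fin d), ∀ i : Fin N, fam L a q t i p = p) →
        ∀ A : Set (EuclideanSpace ℝ (Fin d)), IsAttractor (fam L a q t) A →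
          ¬ IsConnected A :=
  stmt8_general hN L a q
end

section
/- For every nonempty compact set S ⊆ ℝ^d, the set of weak components of S forms a partition of S: the weak components are pairwise disjoint and their union is S. -/
open Metric Filter Set
open scoped RealInnerProductSpace

/-! The projection of a set onto the normal direction of a hyperplane is an interval exactly when
no parallel hyperplane separates it. So weak connectedness means that every linear functional maps
the set onto an interval, and the usual stability properties of preconnected subsets of `ℝ`
(unions through a common point, directed unions, closures) transfer to weakly connected sets.
Weak components are then obtained by Zorn's lemma, taking closures of chain unions to stay
compact, and two components that meet are equal because their union is again weakly connected. -/

section WeaklyConnected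

variable {E : Type*}

section Module

variable [AddCommGroup E] [Module ℝ E]

theorem weaklyConnected_iff_isPreconnected_image {T : Set E} :
    WeaklyConnected T ↔ ∀ φ : E →ₗ[ℝ] ℝ, IsPreconnected (φ '' T) := by
  simp only [isPreconnected_iff_ordConnected, ordConnected_def]
  constructor
  · rintro hT φ _ ⟨p, hp, rfl⟩ _ ⟨q, hq, rfl⟩ c ⟨hpc, hcq⟩
    by_contra hc
    have havoid : ∀ x ∈ T, φ x ≠ c := fun x hx hxc => hc ⟨x, hx, hxc⟩
    refine hT ⟨φ, c, ?_, havoid, ⟨p, hp, hpc.lt_of_ne (havoid p hp)⟩,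
      ⟨q, hq, hcq.lt_of_ne' (havoid q hq)⟩⟩
    rintro rfl
    exact hc ⟨p, hp, le_antisymm hpc hcq⟩
  · rintro hT ⟨φ, c, -, havoid, ⟨p, hp, hpc⟩, ⟨q, hq, hcq⟩⟩
    obtain ⟨x, hx, hxc⟩ := hT φ (mem_image_of_mem φ hp) (mem_image_of_mem φ hq) ⟨hpc.le, hcq.le⟩
    exact havoid x hx hxc

theorem weaklyConnected_singleton (x : E) : WeaklyConnected ({x} : Set E) :=
  weaklyConnected_iff_isPreconnected_image.2 fun φ => by
    rw [image_singleton]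
    exact isPreconnected_singleton

theorem WeaklyConnected.union {T₁ T₂ : Set E} (h₁ : WeaklyConnected T₁)
    (h₂ : WeaklyConnected T₂) (hT : (T₁ ∩ T₂).Nonempty) : WeaklyConnected (T₁ ∪ T₂) := by
  rw [weaklyConnected_iff_isPreconnected_image] at h₁ h₂ ⊢
  intro φ
  rw [image_union]
  exact (h₁ φ).union' ((hT.image φ).mono (image_inter_subset φ T₁ T₂)) (h₂ φ)

theorem weaklyConnected_sUnion_of_directedOn {𝒞 : Set (Set E)} (hdir : DirectedOn (· ⊆ ·) 𝒞)
    (h𝒞 : ∀ T ∈ 𝒞, WeaklyConnected T) : WeaklyConnected (⋃₀ 𝒞) := by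
  refine weaklyConnected_iff_isPreconnected_image.2 fun φ => ?_
  rw [image_sUnion]
  refine IsPreconnected.sUnion_directed (hdir.mono_comp fun _ _ h => image_mono h) ?_
  rintro _ ⟨T, hT, rfl⟩
  exact weaklyConnected_iff_isPreconnected_image.1 (h𝒞 T hT) φ

end Module

variable [NormedAddCommGroup E] [NormedSpace ℝ E]

theorem WeaklyConnected.closure [FiniteDimensional ℝ E] {T : Set E} (hT : WeaklyConnected T) :
    WeaklyConnected (closure T) :=
  weaklyConnected_iff_isPreconnected_image.2 fun φ =>
    (weaklyConnected_iff_isPreconnected_image.1 hT φ).subset_closure (image_mono subset_closure)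
      (image_closure_subset_closure_image φ.continuous_of_finiteDimensional)

theorem IsWeakComponent.eq_of_inter_nonempty {S C₁ C₂ : Set E} (h₁ : IsWeakComponent S C₁)
    (h₂ : IsWeakComponent S C₂) (h : (C₁ ∩ C₂).Nonempty) : C₁ = C₂ := by
  obtain ⟨-, hS₁, hc₁, hw₁, hmax₁⟩ := h₁
  obtain ⟨-, hS₂, hc₂, hw₂, hmax₂⟩ := h₂
  have hsub := union_subset hS₁ hS₂
  have hwc := hw₁.union hw₂ h
  rw [← hmax₁ _ hsub (hc₁.union hc₂) hwc subset_union_left,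
    hmax₂ _ hsub (hc₁.union hc₂) hwc subset_union_right]

theorem exists_isWeakComponent_superset [FiniteDimensional ℝ E] {S T : Set E} (hS : IsCompact S)
    (hTS : T ⊆ S) (hTc : IsCompact T) (hTw : WeaklyConnected T) (hT : T.Nonempty) :
    ∃ C, IsWeakComponent S C ∧ T ⊆ C := by
  let P : Set (Set E) := {C | C ⊆ S ∧ IsCompact C ∧ WeaklyConnected C}
  have hub : ∀ 𝒞 ⊆ P, IsChain (· ⊆ ·) 𝒞 → 𝒞.Nonempty → ∃ ub ∈ P, ∀ C ∈ 𝒞, C ⊆ ub := by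
    intro 𝒞 h𝒞P hchain _
    have hclS : closure (⋃₀ 𝒞) ⊆ S :=
      closure_minimal (sUnion_subset fun C hC => (h𝒞P hC).1) hS.isClosed
    refine ⟨closure (⋃₀ 𝒞), ⟨hclS, hS.of_isClosed_subset isClosed_closure hclS, ?_⟩,
      fun C hC => (subset_sUnion_of_mem hC).trans subset_closure⟩
    exact (weaklyConnected_sUnion_of_directedOn hchain.directedOn
      fun C hC => (h𝒞P hC).2.2).closure
  obtain ⟨C, hTC, ⟨hCS, hCc, hCw⟩, hmax⟩ := zorn_subset_nonempty P hub T ⟨hTS, hTc, hTw⟩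
  exact ⟨C, ⟨hT.mono hTC, hCS, hCc, hCw, fun C' hC'S hC'c hC'w hCC' =>
    (hmax (y := C') ⟨hC'S, hC'c, hC'w⟩ hCC').antisymm hCC'⟩, hTC⟩

theorem sUnion_isWeakComponent [FiniteDimensional ℝ E] {S : Set E} (hS : IsCompact S) :
    ⋃₀ {C | IsWeakComponent S C} = S := by
  refine (sUnion_subset fun C hC => hC.2.1).antisymm fun x hx => ?_
  obtain ⟨C, hC, hxC⟩ := exists_isWeakComponent_superset hS (singleton_subset_iff.2 hx)
    isCompact_singleton (weaklyConnected_singleton x) (singleton_nonempty x)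
  exact ⟨C, hC, hxC rfl⟩

end WeaklyConnected

theorem stmt9_general {d : ℕ} (S : Set (EuclideanSpace ℝ (Fin d)))
    (hSc : IsCompact S) :
    (∀ C₁ C₂ : Set (EuclideanSpace ℝ (Fin d)),
      IsWeakComponent S C₁ → IsWeakComponent S C₂ → C₁ ≠ C₂ → Disjoint C₁ C₂) ∧
    ⋃₀ {C : Set (EuclideanSpace ℝ (Fin d)) | IsWeakComponent S C} = S := by
  refine ⟨fun C₁ C₂ h₁ h₂ hne => ?_, sUnion_isWeakComponent hSc⟩
  by_contra hmeet
  exact hne (h₁.eq_of_inter_nonempty h₂ (not_disjoint_iff_nonempty_inter.1 hmeet))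

/-- For every nonempty compact set `S ⊆ ℝ^d`, the weak components of `S`
form a partition of `S`: they are pairwise disjoint and their union is `S`. -/
theorem stmt9 {d : ℕ} (S : Set (EuclideanSpace ℝ (Fin d)))
    (hS : S.Nonempty) (hSc : IsCompact S) :
    (∀ C₁ C₂ : Set (EuclideanSpace ℝ (Fin d)),
      IsWeakComponent S C₁ → IsWeakComponent S C₂ → C₁ ≠ C₂ → Disjoint C₁ C₂) ∧
    ⋃₀ {C : Set (EuclideanSpace ℝ (Fin d)) | IsWeakComponent S C} = S :=
  stmt9_general S hSc
end

section
/- Let A be the attractor of an affine IFS on ℝ^d (each map having invertible linear part). If A has nonempty interior, then A is equal to the closure of its interior. -/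
/-!
For nonempty compact `K`, every point of the attractor `A` is a limit of points `z n ∈ F^n(K)`,
and every limit of such points lies in `A`. Taking `K = A` and using `F^{n+1}(A) = F^n(F(A))`,
continuity of the maps gives `F(A) ⊆ A`. Since the maps are open, `F` then maps `interior A` into
itself, hence maps `B = closure (interior A)` into itself. So `F^n(B) ⊆ B` for all `n`, and as
`B` is nonempty and compact, the points of `A` are limits of points of `B`: `A ⊆ B`.
-/

open Metric Filter Set
open scoped RealInnerProductSpace

open Topology

theorem exists_tendsto_dist_zero_of_tendsto_hausdorffDist {E : Type*} [PseudoMetricSpace E]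
    {S T : ℕ → Set E} (hfin : ∀ n, hausdorffEDist (S n) (T n) ≠ ⊤)
    (hST : Tendsto (fun n => hausdorffDist (S n) (T n)) atTop (𝓝 0))
    {z : ℕ → E} (hz : ∀ n, z n ∈ S n) :
    ∃ w : ℕ → E, (∀ n, w n ∈ T n) ∧ Tendsto (fun n => dist (z n) (w n)) atTop (𝓝 0) := by
  have hclose : ∀ n : ℕ, ∃ w ∈ T n,
      dist (z n) w < hausdorffDist (S n) (T n) + 1 / ((n : ℝ) + 1) := fun n =>
    exists_dist_lt_of_hausdorffDist_lt (hz n) (lt_add_of_pos_right _ Nat.one_div_pos_of_nat)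
      (hfin n)
  choose w hwT hw using hclose
  refine ⟨w, hwT, squeeze_zero (fun n => dist_nonneg) (fun n => (hw n).le) ?_⟩
  simpa using hST.add tendsto_one_div_add_atTop_nhds_zero_nat

section Hutchinson

variable {ι E : Type*} {f : ι → E → E}

theorem hutch_mono : Monotone (hutch f) :=
  fun _ _ hKK' => iUnion_mono fun _ => image_mono hKK'

theorem mem_hutch_of_mem {K : Set E} {x : E} (i : ι) (hx : x ∈ K) : f i x ∈ hutch f K :=
  mem_iUnion.2 ⟨i, mem_image_of_mem _ hx⟩

theorem hutch_iterate_subset {B : Set E} (hB : hutch f B ⊆ B) (n : ℕ) :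
    (hutch f)^[n] B ⊆ B :=
  hutch_mono.antitone_iterate_of_map_le hB (Nat.zero_le n)

theorem hutch_closure_interior_subset [TopologicalSpace E] (hc : ∀ i, Continuous (f i))
    (ho : ∀ i, IsOpenMap (f i)) {A : Set E} (hA : hutch f A ⊆ A) :
    hutch f (closure (interior A)) ⊆ closure (interior A) := by
  have hint : ∀ i, f i '' interior A ⊆ interior A := fun i =>
    interior_maximal ((image_mono interior_subset).trans ((subset_iUnion _ i).trans hA))
      (ho i _ isOpen_interior)
  refine iUnion_subset fun i => ?_
  exact (image_closure_subset_closure_image (hc i)).trans (closure_mono (hint i))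

theorem isCompact_hutch_iterate [TopologicalSpace E] [Finite ι] (hc : ∀ i, Continuous (f i))
    {K : Set E} (hK : IsCompact K) (n : ℕ) : IsCompact ((hutch f)^[n] K) :=
  Function.Iterate.rec _ hK (fun _ hK' => isCompact_iUnion fun i => hK'.image (hc i)) n

theorem Set.Nonempty.hutch_iterate [Nonempty ι] {K : Set E} (hK : K.Nonempty) (n : ℕ) :
    ((hutch f)^[n] K).Nonempty :=
  Function.Iterate.rec _ hK
    (fun _ ⟨x, hx⟩ => ⟨f (Classical.arbitrary ι) x, mem_hutch_of_mem _ hx⟩) n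

end Hutchinson

namespace IsAttractor

variable {ι E : Type*} [MetricSpace E] [Finite ι] [Nonempty ι] {f : ι → E → E} {A K : Set E}

theorem hausdorffEDist_ne_top (hA : IsAttractor f A) (hc : ∀ i, Continuous (f i))
    (hK : IsCompact K) (hKne : K.Nonempty) (n : ℕ) :
    hausdorffEDist ((hutch f)^[n] K) A ≠ ⊤ :=
  hausdorffEDist_ne_top_of_nonempty_of_bounded (hKne.hutch_iterate n) hA.1
    (isCompact_hutch_iterate hc hK n).isBounded hA.2.1.isBounded

theorem exists_tendsto (hA : IsAttractor f A) (hc : ∀ i, Continuous (f i))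
    (hK : IsCompact K) (hKne : K.Nonempty) {x : E} (hx : x ∈ A) :
    ∃ z : ℕ → E, (∀ n, z n ∈ (hutch f)^[n] K) ∧ Tendsto z atTop (𝓝 x) := by
  obtain ⟨z, hzK, hz⟩ := exists_tendsto_dist_zero_of_tendsto_hausdorffDist
    (S := fun _ => A)
    (fun n => by rw [hausdorffEDist_comm]; exact hA.hausdorffEDist_ne_top hc hK hKne n)
    (by simpa only [hausdorffDist_comm] using hA.2.2 K hKne hK) (z := fun _ => x) fun _ => hx
  exact ⟨z, hzK, tendsto_const_nhds.congr_dist hz⟩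

theorem mem_of_tendsto (hA : IsAttractor f A) (hc : ∀ i, Continuous (f i))
    (hK : IsCompact K) (hKne : K.Nonempty) {z : ℕ → E} (hzK : ∀ n, z n ∈ (hutch f)^[n] K)
    {y : E} (hz : Tendsto z atTop (𝓝 y)) : y ∈ A := by
  obtain ⟨w, hwA, hzw⟩ := exists_tendsto_dist_zero_of_tendsto_hausdorffDist
    (hA.hausdorffEDist_ne_top hc hK hKne) (hA.2.2 K hKne hK) hzK
  exact hA.2.1.isClosed.mem_of_tendsto (hz.congr_dist hzw) (Eventually.of_forall hwA)

theorem hutch_subset (hA : IsAttractor f A) (hc : ∀ i, Continuous (f i)) : hutch f A ⊆ A := by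
  refine iUnion_subset fun i => ?_
  rintro _ ⟨x, hx, rfl⟩
  obtain ⟨z, hzA, hz⟩ := hA.exists_tendsto hc hA.2.1 hA.1 hx
  refine hA.mem_of_tendsto hc (isCompact_hutch_iterate hc hA.2.1 1) (hA.1.hutch_iterate 1)
    (fun n => ?_) (((hc i).tendsto x).comp hz)
  rw [← Function.iterate_add_apply, Function.iterate_succ_apply']
  exact mem_hutch_of_mem i (hzA n)

theorem subset_of_hutch_subset (hA : IsAttractor f A) (hc : ∀ i, Continuous (f i))
    {B : Set E} (hB : IsCompact B) (hBne : B.Nonempty) (hFB : hutch f B ⊆ B) : A ⊆ B := by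
  intro x hx
  obtain ⟨z, hzB, hz⟩ := hA.exists_tendsto hc hB hBne hx
  exact hB.isClosed.mem_of_tendsto hz
    (Eventually.of_forall fun n => hutch_iterate_subset hFB n (hzB n))

theorem closure_interior_eq (hA : IsAttractor f A) (hc : ∀ i, Continuous (f i))
    (ho : ∀ i, IsOpenMap (f i)) (hint : (interior A).Nonempty) :
    closure (interior A) = A := by
  have hBA : closure (interior A) ⊆ A := closure_minimal interior_subset hA.2.1.isClosed
  exact hBA.antisymm <| hA.subset_of_hutch_subset hc
    (hA.2.1.of_isClosed_subset isClosed_closure hBA) hint.closure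
    (hutch_closure_interior_subset hc ho (hA.hutch_subset hc))

end IsAttractor

/-- If the attractor `A` of an affine IFS on `ℝ^d` has nonempty interior,
then `A` is the closure of its interior. -/
theorem stmt14 {d N : ℕ} (hN : 2 ≤ N)
    (L : Fin N → EuclideanSpace ℝ (Fin d) →L[ℝ] EuclideanSpace ℝ (Fin d))
    (hL : ∀ i, Function.Bijective (L i))
    (a : Fin N → EuclideanSpace ℝ (Fin d))
    (f : Fin N → EuclideanSpace ℝ (Fin d) → EuclideanSpace ℝ (Fin d))
    (hf : ∀ i x, f i x = L i x + a i)
    (A : Set (EuclideanSpace ℝ (Fin d))) (hA : IsAttractor f A)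
    (hint : (interior A).Nonempty) :
    A = closure (interior A) := by
  have : Nonempty (Fin N) := ⟨⟨0, by omega⟩⟩
  let e : Fin N → EuclideanSpace ℝ (Fin d) ≃ₜ EuclideanSpace ℝ (Fin d) := fun i =>
    ((LinearEquiv.ofBijective (L i).toLinearMap (hL i)).toContinuousLinearEquiv.toHomeomorph).trans
      (Homeomorph.addRight (a i))
  have he : ∀ i, f i = e i := fun i => funext (hf i)
  exact (hA.closure_interior_eq (fun i => he i ▸ (e i).continuous)
    (fun i => he i ▸ (e i).isOpenMap) hint).symm
end
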